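/- Let Π* be optimal for the risk-sensitive constrained MDP and suppose Π ∈ M(Π*), i.e., Π solves LP(Π*). Then for every t ≤ T-1 the one-step modification η^t_{Π*,Π} (which follows Π* except at epoch t, where it uses Π's decision rule) is feasible for the constrained MDP and satisfies J_r(η^t_{Π*,Π}, α_r) = J_r(Π*, α_r); i.e., every one-step deviation prescribed by an LP(Π*)-solution is itself optimal. -/
import Mathlib


open Finset Real MeasureTheory

noncomputable section

variable {S A : Type*} [Fintype S] [Fintype A] [DecidableEq S] [DecidableEq A]

namespace RiskCMDP

/-- Probability weight of a full trajectory `(s, a)` of `N` transitions under policy `d`,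
kernel `p` and initial distribution `α`. -/
def trajWeight (N : ℕ) (α : S → ℝ) (d : ℕ → S → A → ℝ) (p : ℕ → S → A → S → ℝ)
    (s : Fin (N+1) → S) (a : Fin N → A) : ℝ :=
  α (s 0) * ∏ k : Fin N, d k (s k.castSucc) (a k) * p k (s k.castSucc) (a k) (s k.succ)

/-- Accumulated cost of a full trajectory, including terminal cost. -/
def totalCost (N : ℕ) (m : ℕ → S → A → S → ℝ) (mT : S → ℝ)
    (s : Fin (N+1) → S) (a : Fin N → A) : ℝ :=
  (∑ k : Fin N, m k (s k.castSucc) (a k) (s k.succ)) + mT (s (Fin.last N))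

/-- Risk-sensitive value `J_m(Π, α) = E[exp(Σ m_t + m_T)]`. -/
def J (N : ℕ) (α : S → ℝ) (d : ℕ → S → A → ℝ) (p : ℕ → S → A → S → ℝ)
    (m : ℕ → S → A → S → ℝ) (mT : S → ℝ) : ℝ :=
  ∑ s : Fin (N+1) → S, ∑ a : Fin N → A,
    trajWeight N α d p s a * Real.exp (totalCost N m mT s a)

/-- Forward factor `θ^Π_{m,t}(x) = E[exp(Σ_{k<t} m_k) 1{X_t = x}]` (0-based time `t`). -/
def theta (α : S → ℝ) (d : ℕ → S → A → ℝ) (p : ℕ → S → A → S → ℝ)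
    (m : ℕ → S → A → S → ℝ) (t : ℕ) (x : S) : ℝ :=
  ∑ s : Fin (t+1) → S, ∑ a : Fin t → A,
    (if s (Fin.last t) = x then
      α (s 0) * ∏ k : Fin t, (d k (s k.castSucc) (a k) * p k (s k.castSucc) (a k) (s k.succ)
        * Real.exp (m k (s k.castSucc) (a k) (s k.succ)))
     else 0)

/-- Backward factor with `r` remaining transitions (absolute time `N - r`). -/
def Qaux (N : ℕ) (d : ℕ → S → A → ℝ) (p : ℕ → S → A → S → ℝ)
    (m : ℕ → S → A → S → ℝ) (mT : S → ℝ) : ℕ → S → A → ℝ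
  | 0, x, _ => Real.exp (mT x)
  | (r+1), x, a =>
      ∑ x' : S, ∑ a' : A,
        Real.exp (m (N - (r+1)) x a x') * p (N - (r+1)) x a x'
          * d (N - r) x' a' * Qaux N d p m mT r x' a'

/-- Backward factor `Q^Π_{m,t}(x,a)` at (0-based) time `t ≤ N`. -/
def Qb (N : ℕ) (d : ℕ → S → A → ℝ) (p : ℕ → S → A → S → ℝ)
    (m : ℕ → S → A → S → ℝ) (mT : S → ℝ) (t : ℕ) (x : S) (a : A) : ℝ :=
  Qaux N d p m mT (N - t) x a

/-- `f_t(Π̃, Θ^Π_m, Q^Π_m) = Σ_{x,a} θ^Π_{m,t}(x) d̃_t(x,a) Q^Π_{m,t}(x,a)`. -/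
def fF (N : ℕ) (α : S → ℝ) (d dtil : ℕ → S → A → ℝ) (p : ℕ → S → A → S → ℝ)
    (m : ℕ → S → A → S → ℝ) (mT : S → ℝ) (t : ℕ) : ℝ :=
  ∑ x : S, ∑ a : A, theta α d p m t x * dtil t x a * Qb N d p m mT t x a

/-- A Markovian randomized policy. -/
def isPolicy (d : ℕ → S → A → ℝ) : Prop :=
  (∀ t x a, 0 ≤ d t x a) ∧ ∀ t x, ∑ a : A, d t x a = 1

/-- A transition kernel. -/
def isKernel (p : ℕ → S → A → S → ℝ) : Prop :=
  (∀ t x a x', 0 ≤ p t x a x') ∧ ∀ t x a, ∑ x' : S, p t x a x' = 1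

/-- A probability distribution on states. -/
def isDist (α : S → ℝ) : Prop := (∀ x, 0 ≤ α x) ∧ ∑ x : S, α x = 1

/-- The one-step modification `η^t_{Π,Π̃}`: follow `d` except at epoch `t`, where `dtil` is used. -/
def update (d dtil : ℕ → S → A → ℝ) (t : ℕ) : ℕ → S → A → ℝ :=
  fun k => if k = t then dtil k else d k

/-- Feasibility for the risk-sensitive constrained MDP. -/
def feasible (N : ℕ) (αc : S → ℝ) (p : ℕ → S → A → S → ℝ) (c : ℕ → S → A → S → ℝ)
    (cT : S → ℝ) (B : ℝ) (d : ℕ → S → A → ℝ) : Prop :=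
  isPolicy d ∧ J N αc d p c cT ≤ B

/-- Optimality for the risk-sensitive constrained MDP. -/
def optimalCMDP (N : ℕ) (αr αc : S → ℝ) (p : ℕ → S → A → S → ℝ)
    (r c : ℕ → S → A → S → ℝ) (rT cT : S → ℝ) (B : ℝ) (d : ℕ → S → A → ℝ) : Prop :=
  feasible N αc p c cT B d ∧
    ∀ d', feasible N αc p c cT B d' → J N αr d' p r rT ≤ J N αr d p r rT

/-- Feasibility for the linear program `LP(Π)` with base policy `base`. -/
def LPfeas (N : ℕ) (αc : S → ℝ) (base : ℕ → S → A → ℝ) (p : ℕ → S → A → S → ℝ)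
    (c : ℕ → S → A → S → ℝ) (cT : S → ℝ) (B : ℝ) (dtil : ℕ → S → A → ℝ) : Prop :=
  isPolicy dtil ∧ ∀ t, t < N → fF N αc base dtil p c cT t ≤ B

/-- Objective of `LP(Π)`: `Σ_t f_t(Π̃, Θ^Π_r, Q^Π_r)`. -/
def LPobj (N : ℕ) (αr : S → ℝ) (base dtil : ℕ → S → A → ℝ) (p : ℕ → S → A → S → ℝ)
    (r : ℕ → S → A → S → ℝ) (rT : S → ℝ) : ℝ :=
  ∑ t ∈ Finset.range N, fF N αr base dtil p r rT t

/-- `dtil ∈ M(base)`: `dtil` is an optimal solution of `LP(base)`. -/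
def LPopt (N : ℕ) (αr αc : S → ℝ) (base : ℕ → S → A → ℝ) (p : ℕ → S → A → S → ℝ)
    (r c : ℕ → S → A → S → ℝ) (rT cT : S → ℝ) (B : ℝ) (dtil : ℕ → S → A → ℝ) : Prop :=
  LPfeas N αc base p c cT B dtil ∧
    ∀ d', LPfeas N αc base p c cT B d' →
      LPobj N αr base d' p r rT ≤ LPobj N αr base dtil p r rT


set_option linter.unusedSectionVars false
set_option maxHeartbeats 1000000

lemma sum_snoc {S : Type*} [Fintype S] {n : ℕ} (f : (Fin (n+1) → S) → ℝ) :
    ∑ s : Fin (n+1) → S, f s = ∑ s' : Fin n → S, ∑ x : S, f (Fin.snoc s' x) := by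
  rw [← Equiv.sum_comp (Fin.snocEquiv (fun _ => S)) f, Fintype.sum_prod_type]
  rw [Finset.sum_comm]
  rfl

lemma sum4_comm {ι κ μ ν : Type*} [Fintype ι] [Fintype κ] [Fintype μ] [Fintype ν]
    (F : ι → κ → μ → ν → ℝ) :
    ∑ i : ι, ∑ k : κ, ∑ m : μ, ∑ n : ν, F i k m n
      = ∑ m : μ, ∑ n : ν, ∑ i : ι, ∑ k : κ, F i k m n := by
  have h1 : ∀ i, (∑ k : κ, ∑ m : μ, ∑ n : ν, F i k m n)
      = ∑ m : μ, ∑ n : ν, ∑ k : κ, F i k m n := by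
    intro i
    rw [Finset.sum_comm]
    exact Finset.sum_congr rfl fun m _ => Finset.sum_comm
  simp only [h1]
  rw [Finset.sum_comm]
  exact Finset.sum_congr rfl fun m _ => Finset.sum_comm

lemma theta_succ (α : S → ℝ) (d : ℕ → S → A → ℝ) (p : ℕ → S → A → S → ℝ)
    (m : ℕ → S → A → S → ℝ) (t : ℕ) (y : S) :
    theta α d p m (t+1) y =
      ∑ x : S, ∑ a : A, theta α d p m t x *
        (d t x a * p t x a y * Real.exp (m t x a y)) := by
  unfold theta
  have h1 : ∀ g : (Fin (t+1+1) → S) → ℝ,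
      ∑ s, g s = ∑ s' : Fin (t+1) → S, ∑ x : S, g (Fin.snoc s' x) := fun g => sum_snoc g
  have h2 : ∀ g : (Fin (t+1) → A) → ℝ,
      ∑ a, g a = ∑ a' : Fin t → A, ∑ b : A, g (Fin.snoc a' b) := fun g => sum_snoc g
  rw [h1]
  simp only [h2]
  simp only [Fin.prod_univ_castSucc, Fin.snoc_last, Fin.snoc_castSucc, Fin.succ_castSucc,
    Fin.succ_last, ← Fin.castSucc_zero, Fin.snoc_castSucc, Fin.coe_castSucc, Fin.val_last]
  conv_lhs => enter [2, s']; rw [Finset.sum_comm]; enter [2, a']; rw [Finset.sum_comm]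
  simp only [Finset.sum_ite_eq', Finset.mem_univ, if_true]
  conv_rhs => simp only [Finset.sum_mul, ite_mul, zero_mul]
  conv_rhs => rw [Finset.sum_comm]; enter [2, b]; rw [Finset.sum_comm]; enter [2, s'];
              rw [Finset.sum_comm]
  simp only [Finset.sum_ite_eq, Finset.mem_univ, if_true]
  conv_rhs => rw [Finset.sum_comm]; enter [2, s']; rw [Finset.sum_comm]
  refine Finset.sum_congr rfl fun s' _ => Finset.sum_congr rfl fun a' _ =>
    Finset.sum_congr rfl fun b _ => ?_
  ring

lemma fF_self_succ (N : ℕ) (α : S → ℝ) (d : ℕ → S → A → ℝ) (p : ℕ → S → A → S → ℝ)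
    (m : ℕ → S → A → S → ℝ) (mT : S → ℝ) (t : ℕ) (h : t < N) :
    fF N α d d p m mT t = fF N α d d p m mT (t + 1) := by
  unfold fF Qb
  have h1 : N - t = (N - (t+1)) + 1 := by omega
  have h2 : N - (N - (t+1) + 1) = t := by omega
  have h3 : N - (N - (t+1)) = t + 1 := by omega
  rw [h1]
  simp only [Qaux, h2, h3, theta_succ]
  simp only [Finset.mul_sum, Finset.sum_mul]
  conv_rhs => rw [sum4_comm]
  refine Finset.sum_congr rfl fun x _ => Finset.sum_congr rfl fun a _ =>
    Finset.sum_congr rfl fun x' _ => Finset.sum_congr rfl fun a' _ => ?_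
  ring

lemma fF_N_eq_J (N : ℕ) (α : S → ℝ) (d : ℕ → S → A → ℝ) (p : ℕ → S → A → S → ℝ)
    (m : ℕ → S → A → S → ℝ) (mT : S → ℝ) (hd : ∀ x : S, ∑ a : A, d N x a = 1) :
    fF N α d d p m mT N = J N α d p m mT := by
  unfold fF Qb
  simp only [Nat.sub_self, Qaux]
  have step1 : ∀ x : S, (∑ a : A, theta α d p m N x * d N x a * Real.exp (mT x))
      = theta α d p m N x * Real.exp (mT x) := by
    intro x
    rw [← Finset.sum_mul]
    rw [← Finset.mul_sum, hd x, mul_one]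
  simp only [step1]
  unfold theta J trajWeight totalCost
  simp only [Finset.sum_mul, ite_mul, zero_mul]
  rw [Finset.sum_comm]
  refine Finset.sum_congr rfl fun s _ => ?_
  rw [Finset.sum_comm]
  refine Finset.sum_congr rfl fun a _ => ?_
  rw [Finset.sum_ite_eq, if_pos (Finset.mem_univ _)]
  rw [Finset.prod_mul_distrib, Real.exp_add, ← Real.exp_sum]
  ring

lemma fF_self_eq_J (N : ℕ) (α : S → ℝ) (d : ℕ → S → A → ℝ) (p : ℕ → S → A → S → ℝ)
    (m : ℕ → S → A → S → ℝ) (mT : S → ℝ) (hd : ∀ x : S, ∑ a : A, d N x a = 1)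
    (t : ℕ) (ht : t ≤ N) :
    fF N α d d p m mT t = J N α d p m mT := by
  have key : ∀ k, k ≤ N → fF N α d d p m mT (N - k) = J N α d p m mT := by
    intro k
    induction k with
    | zero => intro _; simpa using fF_N_eq_J N α d p m mT hd
    | succ k ih =>
      intro hk
      have h1 : N - (k+1) < N := by omega
      have h2 : N - (k+1) + 1 = N - k := by omega
      rw [fF_self_succ N α d p m mT _ h1, h2]
      exact ih (by omega)
  have := key (N - t) (by omega)
  rwa [Nat.sub_sub_self ht] at this

lemma theta_update (α : S → ℝ) (d dtil : ℕ → S → A → ℝ) (p : ℕ → S → A → S → ℝ)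
    (m : ℕ → S → A → S → ℝ) (t : ℕ) (x : S) :
    theta α (update d dtil t) p m t x = theta α d p m t x := by
  unfold theta
  refine Finset.sum_congr rfl fun s _ => Finset.sum_congr rfl fun a _ => ?_
  congr 1
  refine congrArg _ (Finset.prod_congr rfl fun k _ => ?_)
  have : ((k : Fin t) : ℕ) ≠ t := Nat.ne_of_lt k.isLt
  simp [update, this]

lemma qaux_update (N : ℕ) (d dtil : ℕ → S → A → ℝ) (p : ℕ → S → A → S → ℝ)
    (m : ℕ → S → A → S → ℝ) (mT : S → ℝ) (t : ℕ) :
    ∀ r, t + r ≤ N →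
      Qaux N (update d dtil t) p m mT r = Qaux N d p m mT r := by
  intro r
  induction r with
  | zero => intro _; rfl
  | succ r ih =>
    intro hr
    have hne : N - r ≠ t := by omega
    funext x a
    simp only [Qaux, ih (by omega), update, if_neg hne]

lemma fF_update (N : ℕ) (α : S → ℝ) (d dtil : ℕ → S → A → ℝ) (p : ℕ → S → A → S → ℝ)
    (m : ℕ → S → A → S → ℝ) (mT : S → ℝ) (t : ℕ) (ht : t < N) :
    fF N α (update d dtil t) (update d dtil t) p m mT t = fF N α d dtil p m mT t := by
  unfold fF Qb
  rw [qaux_update N d dtil p m mT t (N - t) (by omega)]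
  refine Finset.sum_congr rfl fun x _ => Finset.sum_congr rfl fun a _ => ?_
  rw [theta_update]
  simp [update]

lemma isPolicy_update {d dtil : ℕ → S → A → ℝ} (hd : isPolicy d) (hdt : isPolicy dtil)
    (t : ℕ) : isPolicy (update d dtil t) := by
  constructor
  · intro k x a
    unfold update
    split
    · exact hdt.1 k x a
    · exact hd.1 k x a
  · intro k x
    unfold update
    split
    · exact hdt.2 k x
    · exact hd.2 k x

lemma J_update_eq_fF (N : ℕ) (α : S → ℝ) (d dtil : ℕ → S → A → ℝ)
    (p : ℕ → S → A → S → ℝ) (m : ℕ → S → A → S → ℝ) (mT : S → ℝ)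
    (hd : isPolicy d) (hdt : isPolicy dtil) (t : ℕ) (ht : t < N) :
    J N α (update d dtil t) p m mT = fF N α d dtil p m mT t := by
  rw [← fF_update N α d dtil p m mT t ht]
  exact (fF_self_eq_J N α _ p m mT (fun x => (isPolicy_update hd hdt t).2 N x) t
    (le_of_lt ht)).symm

lemma J_eq_fF (N : ℕ) (α : S → ℝ) (d : ℕ → S → A → ℝ)
    (p : ℕ → S → A → S → ℝ) (m : ℕ → S → A → S → ℝ) (mT : S → ℝ)
    (hd : isPolicy d) (t : ℕ) (ht : t ≤ N) :
    J N α d p m mT = fF N α d d p m mT t :=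
  (fF_self_eq_J N α d p m mT (fun x => hd.2 N x) t ht).symm

/-- if `Π*` is optimal for the constrained MDP and `Π ∈ M(Π*)`, then every
one-step modification `η^t_{Π*,Π}` is feasible and achieves the optimal value. -/
theorem one_step_deviation_optimal (N : ℕ) (αr αc : S → ℝ) (p : ℕ → S → A → S → ℝ)
    (r c : ℕ → S → A → S → ℝ) (rT cT : S → ℝ) (B : ℝ)
    (hp : isKernel p) (hαr : isDist αr) (hαc : isDist αc)
    (dstar dd : ℕ → S → A → ℝ)
    (hopt : optimalCMDP N αr αc p r c rT cT B dstar)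
    (hdd : LPopt N αr αc dstar p r c rT cT B dd) :
    ∀ t, t < N →
      feasible N αc p c cT B (update dstar dd t) ∧
        J N αr (update dstar dd t) p r rT = J N αr dstar p r rT := by
  obtain ⟨⟨hpol_star, hJc_star⟩, hopt2⟩ := hopt
  obtain ⟨⟨hpol_dd, hLPc⟩, hLPopt⟩ := hdd
  -- each one-step modification is feasible
  have hfeas : ∀ t, t < N → feasible N αc p c cT B (update dstar dd t) := by
    intro t ht
    refine ⟨isPolicy_update hpol_star hpol_dd t, ?_⟩
    rw [J_update_eq_fF N αc dstar dd p c cT hpol_star hpol_dd t ht]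
    exact hLPc t ht
  have hle : ∀ t, t < N → J N αr (update dstar dd t) p r rT ≤ J N αr dstar p r rT :=
    fun t ht => hopt2 _ (hfeas t ht)
  -- dstar is LP-feasible
  have hstarLP : LPfeas N αc dstar p c cT B dstar := by
    refine ⟨hpol_star, fun t ht => ?_⟩
    rw [← J_eq_fF N αc dstar p c cT hpol_star t (le_of_lt ht)]
    exact hJc_star
  have hobj := hLPopt dstar hstarLP
  have hobj_star : LPobj N αr dstar dstar p r rT = ∑ t ∈ Finset.range N, J N αr dstar p r rT := by
    unfold LPobj
    refine Finset.sum_congr rfl fun t htm => ?_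
    rw [← J_eq_fF N αr dstar p r rT hpol_star t (le_of_lt (Finset.mem_range.mp htm))]
  have hobj_dd : LPobj N αr dstar dd p r rT
      = ∑ t ∈ Finset.range N, J N αr (update dstar dd t) p r rT := by
    unfold LPobj
    refine Finset.sum_congr rfl fun t htm => ?_
    rw [J_update_eq_fF N αr dstar dd p r rT hpol_star hpol_dd t (Finset.mem_range.mp htm)]
  rw [hobj_star, hobj_dd] at hobj
  have hsum_le : ∑ t ∈ Finset.range N, J N αr (update dstar dd t) p r rT
      ≤ ∑ t ∈ Finset.range N, J N αr dstar p r rT :=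
    Finset.sum_le_sum fun t htm => hle t (Finset.mem_range.mp htm)
  have heqsum : ∑ t ∈ Finset.range N, J N αr (update dstar dd t) p r rT
      = ∑ t ∈ Finset.range N, J N αr dstar p r rT := le_antisymm hsum_le hobj
  have hall := (Finset.sum_eq_sum_iff_of_le
    (fun t htm => hle t (Finset.mem_range.mp htm))).mp heqsum
  intro t ht
  exact ⟨hfeas t ht, hall t (Finset.mem_range.mpr ht)⟩

end RiskCMDP
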